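/- arXiv:1903.11170 — 3 statements merged into one kernel-verified Lean document; each statement's English description precedes it below -/
import Mathlib

section
/- Let G be a connected bipartite graph with color classes A and B satisfying |A| = |B|. Then the following three statements are equivalent: (i) G is matching covered; (ii) |N_G(Z)| ≥ |Z| + 1 for every nonempty proper subset Z of A; (iii) for each pair of vertices a ∈ A and b ∈ B, the graph G − a − b has a perfect matching. -/
namespace MinimalBraces

open SimpleGraph

/-- The degree of a vertex, via the cardinality of its neighbor set. -/
noncomputable def mdeg {V : Type*} (G : SimpleGraph V) (v : V) : ℕ :=
  (G.neighborSet v).ncard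

/-- `G` has a perfect matching. -/
def HasPerfectMatching {V : Type*} (G : SimpleGraph V) : Prop :=
  ∃ M : G.Subgraph, M.IsPerfectMatching

/-- A connected graph with at least one edge is matching covered if every edge
lies in some perfect matching. -/
def IsMatchingCovered {V : Type*} (G : SimpleGraph V) : Prop :=
  G.Connected ∧ G.edgeSet.Nonempty ∧
    ∀ e ∈ G.edgeSet, ∃ M : G.Subgraph, M.IsPerfectMatching ∧ e ∈ M.edgeSet

/-- `A`, `B` are the color classes of a bipartition of `G`. -/
def IsBipartition {V : Type*} (G : SimpleGraph V) (A B : Set V) : Prop :=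
  A ∪ B = Set.univ ∧ A ∩ B = ∅ ∧
    ∀ u v : V, G.Adj u v → (u ∈ A ∧ v ∈ B) ∨ (u ∈ B ∧ v ∈ A)

/-- `G` is bipartite (admits a bipartition into two color classes). -/
def IsBipartite' {V : Type*} (G : SimpleGraph V) : Prop :=
  ∃ A B : Set V, IsBipartition G A B

/-- The cut `∂(X)`: the set of edges of `G` with exactly one end in `X`. -/
def cutEdges {V : Type*} (G : SimpleGraph V) (X : Set V) : Set (Sym2 V) :=
  {e | e ∈ G.edgeSet ∧ ∃ u v : V, e = s(u, v) ∧ u ∈ X ∧ v ∉ X}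

/-- The cut `∂(X)` is tight: every perfect matching has exactly one edge in it. -/
def IsTightCut {V : Type*} (G : SimpleGraph V) (X : Set V) : Prop :=
  ∀ M : G.Subgraph, M.IsPerfectMatching → (M.edgeSet ∩ cutEdges G X).ncard = 1

/-- A shore is trivial if it or its complement is a singleton. -/
def IsTrivialShore {V : Type*} (X : Set V) : Prop :=
  (∃ v, X = ({v} : Set V)) ∨ (∃ v, Xᶜ = ({v} : Set V))

/-- A brace: a bipartite matching covered graph free of nontrivial tight cuts. -/
def IsBrace {V : Type*} (G : SimpleGraph V) : Prop :=
  IsBipartite' G ∧ IsMatchingCovered G ∧ ∀ X : Set V, IsTightCut G X → IsTrivialShore X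

/-- A minimal brace: deleting any edge results in a graph that is not a brace. -/
def IsMinimalBrace {V : Type*} (G : SimpleGraph V) : Prop :=
  IsBrace G ∧ ∀ e ∈ G.edgeSet, ¬ IsBrace (G.deleteEdges {e})

/-- The neighborhood of a set of vertices. -/
def setNbhd {V : Type*} (G : SimpleGraph V) (Z : Set V) : Set V :=
  {v | ∃ z ∈ Z, G.Adj z v}

/-- An edge of a (simple) brace is superfluous if deleting it leaves a brace. -/
def IsSuperfluous {V : Type*} (G : SimpleGraph V) (e : Sym2 V) : Prop :=
  e ∈ G.edgeSet ∧ IsBrace (G.deleteEdges {e})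

/-- A set of edges of `G` forming a matching. -/
def IsMatchingSet {V : Type*} (G : SimpleGraph V) (M : Set (Sym2 V)) : Prop :=
  M ⊆ G.edgeSet ∧ ∀ e₁ ∈ M, ∀ e₂ ∈ M, e₁ ≠ e₂ → ∀ v : V, ¬ (v ∈ e₁ ∧ v ∈ e₂)

/-- `G` is 2-extendable: it has a matching of size two, and every matching of
size two extends to a perfect matching. -/
def IsTwoExtendable {V : Type*} (G : SimpleGraph V) : Prop :=
  (∃ M : Set (Sym2 V), IsMatchingSet G M ∧ M.ncard = 2) ∧
  ∀ M : Set (Sym2 V), IsMatchingSet G M → M.ncard = 2 →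
    ∃ N : G.Subgraph, N.IsPerfectMatching ∧ M ⊆ N.edgeSet

/-- `G` is 3-connected: more than three vertices, and removing any at most two
vertices leaves a connected graph. -/
def IsThreeConnected {V : Type*} [Fintype V] (G : SimpleGraph V) : Prop :=
  4 ≤ Fintype.card V ∧ ∀ S : Set V, S.ncard ≤ 2 → (G.induce Sᶜ).Connected

/-! ### Retracts (bicontraction of all degree-two vertices) -/

/-- `f : V → W` realizes `H` as the retract of `G`: the fibers of `f` are exactly
the closed neighborhoods of the degree-two vertices of `G` (and singletons
otherwise), and adjacency in `H` is induced by `G`. -/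
def IsRetractMap {V W : Type*} (G : SimpleGraph V) (H : SimpleGraph W) (f : V → W) : Prop :=
  Function.Surjective f ∧
  (∀ u v : V, f u = f v ↔ (u = v ∨ ∃ v₀ : V, mdeg G v₀ = 2 ∧
      u ∈ insert v₀ (G.neighborSet v₀) ∧ v ∈ insert v₀ (G.neighborSet v₀))) ∧
  (∀ x y : W, H.Adj x y ↔ (x ≠ y ∧ ∃ u v : V, G.Adj u v ∧ f u = x ∧ f v = y))

/-- The retract obtained via `f` is a simple graph, i.e. no two distinct edges of `G`
become parallel after the bicontractions. -/
def RetractMapSimple {V W : Type*} (G : SimpleGraph V) (f : V → W) : Prop :=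
  ∀ e₁ ∈ G.edgeSet, ∀ e₂ ∈ G.edgeSet,
    Sym2.map f e₁ = Sym2.map f e₂ → ¬ (Sym2.map f e₁).IsDiag → e₁ = e₂

/-- An edge `e` of a brace `G` is thin if the retract of `G − e` is also a brace. -/
def IsThinEdge {V : Type*} (G : SimpleGraph V) (e : Sym2 V) : Prop :=
  e ∈ G.edgeSet ∧ ∃ (sH : Set V) (H : SimpleGraph sH) (f : V → sH),
    IsRetractMap (G.deleteEdges {e}) H f ∧ IsBrace H

/-- `e` is a strictly thin edge of `G`, with retract `H` realized by the map `f`: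
the retract of `G − e` is a brace and is simple. -/
def IsStrictlyThinVia {V W : Type*} (G : SimpleGraph V) (e : Sym2 V)
    (H : SimpleGraph W) (f : V → W) : Prop :=
  e ∈ G.edgeSet ∧ IsRetractMap (G.deleteEdges {e}) H f ∧ IsBrace H ∧
    RetractMapSimple (G.deleteEdges {e}) f

/-- `e` is a strictly thin edge of the simple brace `G`. -/
def IsStrictlyThinEdge {V : Type*} (G : SimpleGraph V) (e : Sym2 V) : Prop :=
  ∃ (sH : Set V) (H : SimpleGraph sH) (f : V → sH), IsStrictlyThinVia G e H f

/-- The index of a (strictly thin) edge `e`, computed from `G' = G − e`: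
the number of vertices of degree two in `G'`. -/
noncomputable def thinIndex {V : Type*} (G' : SimpleGraph V) : ℕ :=
  {v : V | mdeg G' v = 2}.ncard

/-- An inner vertex of `G' = G − e`: a vertex of degree two. -/
def IsInnerVertex {V : Type*} (G' : SimpleGraph V) (v : V) : Prop := mdeg G' v = 2

/-- An outer vertex of `G' = G − e`: a neighbor of an inner vertex. -/
def IsOuterVertex {V : Type*} (G' : SimpleGraph V) (v : V) : Prop :=
  ∃ u : V, IsInnerVertex G' u ∧ G'.Adj u v

/-- `(e, F)` is a minimality-preserving pair of the minimal brace `G`, where the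
retract `H` of `G − e` is realized by `f`: the edge `e` is strictly thin and
`H − F` is a minimal brace. -/
def IsMPPVia {V W : Type*} (G : SimpleGraph V) (H : SimpleGraph W) (f : V → W)
    (e : Sym2 V) (F : Set (Sym2 W)) : Prop :=
  IsMinimalBrace G ∧ IsStrictlyThinVia G e H f ∧ F ⊆ H.edgeSet ∧
    IsMinimalBrace (H.deleteEdges F)

/-! ### Stable extensions -/

/-- The `S`-extension of `J` with respect to `S = {a₁, a₂, b₁, b₂}`:
two new vertices `a₀ = inr 0` and `b₀ = inr 1` and five new edges
`a₀b₁, a₀b₂, b₀a₁, b₀a₂, a₀b₀`. -/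
def stableExtGraph {U : Type*} (J : SimpleGraph U) (a₁ a₂ b₁ b₂ : U) :
    SimpleGraph (U ⊕ Fin 2) :=
  SimpleGraph.fromRel (fun x y =>
    match x, y with
    | Sum.inl u, Sum.inl v => J.Adj u v
    | Sum.inl u, Sum.inr k => (k = 0 ∧ (u = b₁ ∨ u = b₂)) ∨ (k = 1 ∧ (u = a₁ ∨ u = a₂))
    | Sum.inr j, Sum.inr k => j ≠ k
    | Sum.inr _, Sum.inl _ => False)

/-- `G` is (isomorphic to) a stable-extension of the connected bipartite graph `J`,
with respect to some stable set meeting each color class in exactly two vertices. -/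
def IsStableExtensionOf {V U : Type*} (G : SimpleGraph V) (J : SimpleGraph U) : Prop :=
  ∃ (A B : Set U) (a₁ a₂ b₁ b₂ : U), J.Connected ∧ IsBipartition J A B ∧
    a₁ ∈ A ∧ a₂ ∈ A ∧ b₁ ∈ B ∧ b₂ ∈ B ∧ a₁ ≠ a₂ ∧ b₁ ≠ b₂ ∧
    ¬ J.Adj a₁ b₁ ∧ ¬ J.Adj a₁ b₂ ∧ ¬ J.Adj a₂ b₁ ∧ ¬ J.Adj a₂ b₂ ∧
    Nonempty (G ≃g stableExtGraph J a₁ a₂ b₁ b₂)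

/-! ### Concrete families of graphs -/

/-- The complete graph on two vertices. -/
def K2graph : SimpleGraph (Fin 2) := ⊤

/-- The cycle graph `Cₙ` on `ZMod n`. -/
def cycleGraph (n : ℕ) : SimpleGraph (ZMod n) :=
  SimpleGraph.fromRel (fun x y => x - y = 1)

/-- The Möbius ladder `M_{2m}`: the cycle `C_{2m}` plus the long chords. -/
def mobiusLadder (m : ℕ) : SimpleGraph (ZMod (2 * m)) :=
  SimpleGraph.fromRel (fun x y => x - y = 1 ∨ x - y = (m : ZMod (2 * m)))

/-- The prism (ladder) over the cycle `Cₘ`. -/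
def prismGraph (m : ℕ) : SimpleGraph (ZMod m × Bool) :=
  SimpleGraph.fromRel (fun p q => (p.2 = q.2 ∧ p.1 - q.1 = 1) ∨ (p.1 = q.1 ∧ p.2 ≠ q.2))

/-- The biwheel `B_{2m+2}`: the cycle `C_{2m}` plus two nonadjacent hubs, one joined to
all even rim vertices, the other to all odd rim vertices. `B_{2n} = biwheel (n-1)`. -/
def biwheel (m : ℕ) : SimpleGraph (ZMod (2 * m) ⊕ Fin 2) :=
  SimpleGraph.fromRel (fun x y =>
    match x, y with
    | Sum.inl a, Sum.inl b => a - b = 1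
    | Sum.inl a, Sum.inr k => (k = 0 ∧ Even a) ∨ (k = 1 ∧ ¬ Even a)
    | Sum.inr _, _ => False)

/-- The complete bipartite graph `K_{3,3}`. -/
def K33graph : SimpleGraph (Fin 3 ⊕ Fin 3) := completeBipartiteGraph (Fin 3) (Fin 3)

/-- The family `𝒢` : `K₂`, `C₄` and the McCuaig braces
(prisms, Möbius ladders and biwheels). -/
def InMcCuaigFamily {V : Type*} (G : SimpleGraph V) : Prop :=
  Nonempty (G ≃g K2graph) ∨ Nonempty (G ≃g cycleGraph 4) ∨
  (∃ m : ℕ, 3 ≤ m ∧ Nonempty (G ≃g prismGraph m)) ∨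
  (∃ m : ℕ, 3 ≤ m ∧ Nonempty (G ≃g mobiusLadder m)) ∨
  (∃ m : ℕ, 3 ≤ m ∧ Nonempty (G ≃g biwheel m))

/-- The graph `Q_{2n}` (for `n ≥ 5`): color classes `{0, …, n-1}` on each side; the
hubs `0, 1` of each side are joined to all vertices `2, …, n-1` of the other side,
and the vertices `2, …, n-1` form a perfect matching between the two sides.
`Qgraph 5 = Q₁₀`, `Qgraph 6 = Q₁₂`, and `Qgraph n = Q_{2n}` of the family `𝒬` for `n ≥ 6`. -/
def Qgraph (n : ℕ) : SimpleGraph (Fin n ⊕ Fin n) :=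
  SimpleGraph.fromRel (fun x y =>
    match x, y with
    | Sum.inl i, Sum.inr j =>
        ((i : ℕ) < 2 ∧ 2 ≤ (j : ℕ)) ∨ ((j : ℕ) < 2 ∧ 2 ≤ (i : ℕ)) ∨
          ((i : ℕ) = (j : ℕ) ∧ 2 ≤ (i : ℕ))
    | _, _ => False)

/-- `Q₁₀⁺`: the graph `Q₁₀` plus an edge joining two noncubic vertices that lie in
distinct color classes (and in distinct `K_{3,3}`-pieces of the tight cut
decomposition of `Q₁₀`). -/
def Q10plus : SimpleGraph (Fin 5 ⊕ Fin 5) :=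
  Qgraph 5 ⊔ SimpleGraph.fromEdgeSet {s((Sum.inl 0 : Fin 5 ⊕ Fin 5), (Sum.inr 0 : Fin 5 ⊕ Fin 5))}

/-- The bipartite complement of `G` with respect to the color classes `A`, `B`. -/
def bipComplement {V : Type*} (G : SimpleGraph V) (A B : Set V) : SimpleGraph V :=
  SimpleGraph.fromRel (fun u v => u ∈ A ∧ v ∈ B ∧ ¬ G.Adj u v)

/-! ### Bi-splitting and expansion operations -/

/-- `G` is obtained from `H` by bi-splitting the noncubic vertex `b` into `b₁ a₀ b₂`,
as witnessed by the projection `f : W → V` (which sends `b₁, a₀, b₂` to `b` and is a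
bijection elsewhere). The edges of `H` at `b` are distributed between `b₁` and `b₂`,
each receiving at least two, and `a₀` is a new vertex adjacent precisely to `b₁, b₂`. -/
def IsBisplitMap {V W : Type*} (H : SimpleGraph V) (b : V) (G : SimpleGraph W)
    (b₁ a₀ b₂ : W) (f : W → V) : Prop :=
  4 ≤ mdeg H b ∧
  Function.Surjective f ∧ f b₁ = b ∧ f a₀ = b ∧ f b₂ = b ∧
  b₁ ≠ b₂ ∧ a₀ ≠ b₁ ∧ a₀ ≠ b₂ ∧
  (∀ u v : W, f u = f v → u = v ∨
      (u ∈ ({b₁, a₀, b₂} : Set W) ∧ v ∈ ({b₁, a₀, b₂} : Set W))) ∧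
  G.neighborSet a₀ = {b₁, b₂} ∧
  3 ≤ mdeg G b₁ ∧ 3 ≤ mdeg G b₂ ∧ ¬ G.Adj b₁ b₂ ∧
  (∀ x : W, x ≠ a₀ → ¬ (G.Adj b₁ x ∧ G.Adj b₂ x)) ∧
  (∀ x y : V, H.Adj x y ↔ (x ≠ y ∧ ∃ u v : W, G.Adj u v ∧ f u = x ∧ f v = y))

/-- Expansion of index zero: adding an edge joining two nonadjacent vertices in
distinct color classes. -/
def ExpansionZero {W V : Type*} (G : SimpleGraph W) (H : SimpleGraph V) : Prop :=
  ∃ (A B : Set V) (a b : V), IsBipartition H A B ∧ a ∈ A ∧ b ∈ B ∧ ¬ H.Adj a b ∧ a ≠ b ∧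
    Nonempty (G ≃g (H ⊔ SimpleGraph.fromEdgeSet {s(a, b)}))

/-- Expansion of index one: `G = H{a → a₁b₀a₂} + b₀w`, where `a, w` are in the same
color class of `H` and `a` is noncubic. -/
def ExpansionOne {W V : Type*} (G : SimpleGraph W) (H : SimpleGraph V) : Prop :=
  ∃ (A B : Set V) (a w : V), IsBipartition H A B ∧
    ((a ∈ A ∧ w ∈ A) ∨ (a ∈ B ∧ w ∈ B)) ∧ a ≠ w ∧ 4 ≤ mdeg H a ∧
    ∃ (G₁ : SimpleGraph W) (a₁ b₀ a₂ : W) (f : W → V) (w' : W),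
      IsBisplitMap H a G₁ a₁ b₀ a₂ f ∧ f w' = w ∧
      G = G₁ ⊔ SimpleGraph.fromEdgeSet {s(b₀, w')}

/-- Expansion of index two: `G = H{a → a₁b₀a₂}{b → b₁a₀b₂} + a₀b₀`, where `a, b` are
noncubic vertices of `H` in distinct color classes. -/
def ExpansionTwo {W V : Type*} (G : SimpleGraph W) (H : SimpleGraph V) : Prop :=
  ∃ (A B : Set V) (a b : V), IsBipartition H A B ∧ a ∈ A ∧ b ∈ B ∧
    4 ≤ mdeg H a ∧ 4 ≤ mdeg H b ∧
    ∃ (sm : Set W) (G₁ : SimpleGraph sm) (a₁ b₀ a₂ : sm) (g : sm → V),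
      IsBisplitMap H a G₁ a₁ b₀ a₂ g ∧
      ∃ (b' : sm) (G₂ : SimpleGraph W) (b₁ a₀ b₂ : W) (f : W → sm) (b₀' : W),
        g b' = b ∧ IsBisplitMap G₁ b' G₂ b₁ a₀ b₂ f ∧ f b₀' = b₀ ∧
        G = G₂ ⊔ SimpleGraph.fromEdgeSet {s(a₀, b₀')}

/-- `G` is obtained from `H` by an expansion operation (of index zero, one or two). -/
def IsExpansionOf {W V : Type*} (G : SimpleGraph W) (H : SimpleGraph V) : Prop :=
  ExpansionZero G H ∨ ExpansionOne G H ∨ ExpansionTwo G H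

/-! ### Narrow minimality-preserving pairs -/

/-- The properties of `F` (viewed in `G − e` via the retract map `fm`) required by the
Main Theorem: (i) if `index(e) = 1` then some outer vertex `v` has `F ⊆ ∂(v)`;
(ii) if `index(e) = 2` then some adjacent outer vertices `u, w` have `F ⊆ ∂({u,w})`;
(iii) for each `f ∈ F`, an end of `f` is cubic iff it is an outer vertex. -/
def NarrowProps {V W : Type*} (G : SimpleGraph V) (fm : V → W) (e : Sym2 V)
    (F : Set (Sym2 W)) : Prop :=
  (thinIndex (G.deleteEdges {e}) = 1 →
      ∃ v : V, IsOuterVertex (G.deleteEdges {e}) v ∧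
        ∀ g ∈ (G.deleteEdges {e}).edgeSet, Sym2.map fm g ∈ F → v ∈ g) ∧
  (thinIndex (G.deleteEdges {e}) = 2 →
      ∃ u w : V, IsOuterVertex (G.deleteEdges {e}) u ∧ IsOuterVertex (G.deleteEdges {e}) w ∧
        (G.deleteEdges {e}).Adj u w ∧
        ∀ g ∈ (G.deleteEdges {e}).edgeSet, Sym2.map fm g ∈ F →
          ((u ∈ g ∧ w ∉ g) ∨ (w ∈ g ∧ u ∉ g))) ∧
  (∀ g ∈ (G.deleteEdges {e}).edgeSet, Sym2.map fm g ∈ F →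
      ∀ x : V, x ∈ g → (mdeg G x = 3 ↔ IsOuterVertex (G.deleteEdges {e}) x))

/-- A narrow minimality-preserving pair, as in the Main Theorem. -/
def IsNarrowMPP {V W : Type*} (G : SimpleGraph V) (H : SimpleGraph W) (fm : V → W)
    (e : Sym2 V) (F : Set (Sym2 W)) : Prop :=
  IsMPPVia G H fm e F ∧
  (F = ∅ ∨ NarrowProps G fm e F) ∧
  F.ncard ≤ thinIndex (G.deleteEdges {e}) + 1 ∧
  (thinIndex (G.deleteEdges {e}) = 1 ∧ F.ncard = 2 →
    IsStableExtensionOf G (H.deleteEdges F))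

/-!
(i) ⇒ (ii): if `|N(Z)| ≤ |Z|`, every perfect matching matches `N(Z)` onto `Z`, so no perfect
matching uses an edge from `N(Z)` to a vertex outside `Z ∪ N(Z)`; such an edge exists because
`G` is connected and `A \ Z` is nonempty.
(ii) ⇒ (iii): deleting `b` costs a set `Z ⊆ A - a` at most one neighbor, so Hall's condition
holds for the side `A - a` of `G - a - b`, whose two sides have equal size.
(iii) ⇒ (i): a perfect matching of `G - a - b` together with the edge `ab`.
-/

open Set

section

variable {V : Type*} {G : SimpleGraph V}

lemma IsBipartition.isBipartiteWith {A B : Set V} (h : IsBipartition G A B) :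
    G.IsBipartiteWith A B :=
  ⟨disjoint_iff_inter_eq_empty.mpr h.2.1, h.2.2⟩

lemma setNbhd_mono {G' : SimpleGraph V} (h : G ≤ G') (Z : Set V) :
    setNbhd G Z ⊆ setNbhd G' Z :=
  fun _ ⟨z, hz, hzv⟩ => ⟨z, hz, h hzv⟩

lemma biUnion_neighborSet_eq_setNbhd (Z : Set V) :
    ⋃ z ∈ Z, G.neighborSet z = setNbhd G Z := by
  ext v
  simp [setNbhd]

lemma image_val_setNbhd_induce (S : Set V) (Z : Set S) :
    Subtype.val '' setNbhd (G.induce S) Z = setNbhd G (Subtype.val '' Z) ∩ S := by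
  ext v
  constructor
  · rintro ⟨⟨v, hv⟩, ⟨z, hz, hzv⟩, rfl⟩
    exact ⟨⟨z, ⟨z, hz, rfl⟩, hzv⟩, hv⟩
  · rintro ⟨⟨_, ⟨z, hz, rfl⟩, hzv⟩, hv⟩
    exact ⟨⟨v, hv⟩, ⟨z, hz, hzv⟩, rfl⟩

lemma ncard_preimage_val (S t : Set V) :
    (Subtype.val ⁻¹' t : Set S).ncard = (S ∩ t).ncard := by
  rw [← Subtype.image_preimage_coe, ncard_image_of_injective _ Subtype.val_injective]

lemma _root_.SimpleGraph.IsBipartiteWith.setNbhd_subset {s t : Set V}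
    (h : G.IsBipartiteWith s t) {Z : Set V} (hZ : Z ⊆ s) : setNbhd G Z ⊆ t :=
  fun _ ⟨_, hz, hzv⟩ => h.mem_of_mem_adj (hZ hz) hzv

lemma _root_.SimpleGraph.IsBipartiteWith.induce {s t : Set V} (h : G.IsBipartiteWith s t)
    (S : Set V) :
    (G.induce S).IsBipartiteWith (Subtype.val ⁻¹' s) (Subtype.val ⁻¹' t) :=
  ⟨h.disjoint.preimage _, fun _ _ hadj => h.mem_of_adj hadj⟩

lemma _root_.SimpleGraph.Subgraph.IsMatching.ncard_le_ncard_setNbhd [Finite V]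
    {M : G.Subgraph} (hM : M.IsMatching) {Z : Set V} (hZ : Z ⊆ M.verts) :
    Z.ncard ≤ (setNbhd M.spanningCoe Z).ncard := by
  choose! μ hμ using fun v (hv : v ∈ M.verts) => (hM hv).exists
  exact ncard_le_ncard_of_injOn μ (fun z hz => ⟨z, hz, hμ z (hZ hz)⟩)
    (fun x hx y hy hxy => hM.eq_of_adj_right (hμ x (hZ hx)) (hxy ▸ hμ y (hZ hy)))
    (toFinite _)

lemma _root_.SimpleGraph.Subgraph.IsMatching.mem_of_adj_of_ncard_setNbhd_le [Finite V]
    {M : G.Subgraph} (hM : M.IsMatching) {Z : Set V} (hZ : Z ⊆ M.verts)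
    (hN : (setNbhd G Z).ncard ≤ Z.ncard) {u w : V} (hu : u ∈ setNbhd G Z) (huw : M.Adj u w) :
    w ∈ Z := by
  have hsub := setNbhd_mono M.spanningCoe_le Z
  have heq := eq_of_subset_of_ncard_le hsub (hN.trans (hM.ncard_le_ncard_setNbhd hZ))
  obtain ⟨z, hz, hzu⟩ := heq ▸ hu
  exact hM.eq_of_adj_left huw hzu.symm ▸ hz

lemma _root_.SimpleGraph.Subgraph.IsMatching.isPerfectMatching_of_subset_verts [Finite V]
    {s t : Set V} (hG : G.IsBipartiteWith s t) (hst : s ∪ t = univ) (hcard : t.ncard ≤ s.ncard)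
    {M : G.Subgraph} (hM : M.IsMatching) (hs : s ⊆ M.verts) : M.IsPerfectMatching := by
  have hsub : setNbhd M.spanningCoe s ⊆ t :=
    (setNbhd_mono M.spanningCoe_le s).trans (hG.setNbhd_subset subset_rfl)
  have heq := eq_of_subset_of_ncard_le hsub (hcard.trans (hM.ncard_le_ncard_setNbhd hs))
  have ht : t ⊆ M.verts := by
    rw [← heq]
    rintro v ⟨z, -, hzv⟩
    exact M.edge_vert hzv.symm
  exact ⟨hM, Subgraph.isSpanning_iff.mpr (eq_univ_of_univ_subset (hst ▸ union_subset hs ht))⟩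

theorem IsMatchingCovered.add_one_le_ncard_setNbhd [Finite V] {A B : Set V}
    (hG : IsMatchingCovered G) (hbip : G.IsBipartiteWith A B) {Z : Set V} (hZA : Z ⊆ A)
    (hZ : Z.Nonempty) (hZA' : Z ≠ A) : Z.ncard + 1 ≤ (setNbhd G Z).ncard := by
  obtain ⟨hconn, -, hcovered⟩ := hG
  by_contra! hN
  obtain ⟨z, hz⟩ := hZ
  obtain ⟨a, haA, haZ⟩ := exists_of_ssubset (hZA.ssubset_of_ne hZA')
  have hNB := hbip.setNbhd_subset hZA
  have haX : a ∉ Z ∪ setNbhd G Z := by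
    rintro (h | h)
    exacts [haZ h, hbip.disjoint.notMem_of_mem_left haA (hNB h)]
  obtain ⟨d, -, hdX, hdX'⟩ :=
    (hconn.preconnected z a).some.exists_boundary_dart _ (Or.inl hz) haX
  have hu : d.fst ∈ setNbhd G Z := hdX.resolve_left fun h => hdX' (Or.inr ⟨_, h, d.adj⟩)
  obtain ⟨M, hM, hdM⟩ := hcovered _ d.edge_mem
  have hdZ := hM.1.mem_of_adj_of_ncard_setNbhd_le (fun v _ => hM.2 v) (by omega) hu hdM
  exact hdX' (Or.inl hdZ)

lemma ncard_le_ncard_setNbhd_induce_compl_pair [Finite V] {A B : Set V}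
    (hbip : G.IsBipartiteWith A B)
    (hHall : ∀ Z : Set V, Z ⊆ A → Z.Nonempty → Z ≠ A → Z.ncard + 1 ≤ (setNbhd G Z).ncard)
    {a b : V} (ha : a ∈ A) {s : Set ({a, b}ᶜ : Set V)} (hs : s ⊆ Subtype.val ⁻¹' A) :
    s.ncard ≤ (setNbhd (G.induce {a, b}ᶜ) s).ncard := by
  rcases s.eq_empty_or_nonempty with rfl | hne
  · simp
  set Z := Subtype.val '' s
  have hZA : Z ⊆ A := by rintro _ ⟨x, hx, rfl⟩; exact hs hx
  have haZ : a ∉ Z := by rintro ⟨x, -, hx⟩; exact x.2 (Or.inl hx)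
  have hHallZ := hHall Z hZA (hne.image _) fun h => haZ (h ▸ ha)
  calc s.ncard = Z.ncard := (ncard_image_of_injective _ Subtype.val_injective).symm
    _ ≤ (setNbhd G Z).ncard - 1 := by omega
    _ ≤ (setNbhd G Z \ {b}).ncard := pred_ncard_le_ncard_sdiff_singleton _ _
    _ ≤ (setNbhd G Z ∩ {a, b}ᶜ).ncard := by
      refine ncard_le_ncard fun v ⟨hv, hvb⟩ => ⟨hv, ?_⟩
      rintro (rfl | rfl)
      exacts [hbip.disjoint.notMem_of_mem_left ha (hbip.setNbhd_subset hZA hv), hvb rfl]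
    _ = (setNbhd (G.induce {a, b}ᶜ) s).ncard := by
      rw [← image_val_setNbhd_induce, ncard_image_of_injective _ Subtype.val_injective]

theorem hasPerfectMatching_induce_compl_pair [Finite V] {A B : Set V}
    (hbip : IsBipartition G A B) (hAB : A.ncard = B.ncard)
    (hHall : ∀ Z : Set V, Z ⊆ A → Z.Nonempty → Z ≠ A → Z.ncard + 1 ≤ (setNbhd G Z).ncard)
    {a b : V} (ha : a ∈ A) (hb : b ∈ B) :
    HasPerfectMatching (G.induce ({a, b}ᶜ : Set V)) := by
  classical
  have := Fintype.ofFinite V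
  have hbipAB := hbip.isBipartiteWith
  have hbipS := hbipAB.induce {a, b}ᶜ
  obtain ⟨M, hAM, hM⟩ := exists_isMatching_of_forall_ncard_le hbipS fun s hs => by
    rw [biUnion_neighborSet_eq_setNbhd]
    exact ncard_le_ncard_setNbhd_induce_compl_pair hbipAB hHall ha hs
  have hcover :
      Subtype.val ⁻¹' A ∪ Subtype.val ⁻¹' B = (univ : Set ({a, b}ᶜ : Set V)) := by
    rw [← preimage_union, hbip.1, preimage_univ]
  have hb' : b ∉ A := hbipAB.disjoint.notMem_of_mem_right hb
  have hbalanced : (Subtype.val ⁻¹' B : Set ({a, b}ᶜ : Set V)).ncard ≤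
      (Subtype.val ⁻¹' A : Set ({a, b}ᶜ : Set V)).ncard := by
    rw [ncard_preimage_val, ncard_preimage_val]
    calc ({a, b}ᶜ ∩ B).ncard ≤ (B \ {b}).ncard :=
          ncard_le_ncard fun v ⟨hv, hvB⟩ => ⟨hvB, fun h => hv (mem_insert_of_mem _ h)⟩
      _ = (A \ {a}).ncard := by
        rw [ncard_sdiff_singleton_of_mem ha, ncard_sdiff_singleton_of_mem hb, hAB]
      _ ≤ ({a, b}ᶜ ∩ A).ncard := ncard_le_ncard fun v ⟨hvA, hva⟩ => ⟨by
          rintro (rfl | rfl)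
          exacts [hva rfl, hb' hvA], hvA⟩
  exact ⟨M, hM.isPerfectMatching_of_subset_verts hbipS hcover hbalanced hAM⟩

lemma exists_isPerfectMatching_mem_edgeSet_of_induce {a b : V} (hab : G.Adj a b)
    (h : HasPerfectMatching (G.induce ({a, b}ᶜ : Set V))) :
    ∃ M : G.Subgraph, M.IsPerfectMatching ∧ s(a, b) ∈ M.edgeSet := by
  obtain ⟨N, hN⟩ := h
  let ι := Embedding.induce (G := G) ({a, b}ᶜ : Set V)
  have hverts : (N.map ι.toHom).verts = {a, b}ᶜ := by
    rw [Subgraph.map_verts, Subgraph.isSpanning_iff.mp hN.2, image_univ]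
    exact Subtype.range_coe
  refine ⟨N.map ι.toHom ⊔ G.subgraphOfAdj hab, ⟨?_, ?_⟩, ?_⟩
  · refine (hN.1.map ι.toHom ι.injective).sup (.subgraphOfAdj hab) ?_
    refine Disjoint.mono (Subgraph.support_subset_verts _) (Subgraph.support_subset_verts _) ?_
    rw [hverts, subgraphOfAdj_verts]
    exact disjoint_compl_left
  · rw [Subgraph.isSpanning_iff, Subgraph.verts_sup, hverts, subgraphOfAdj_verts]
    exact compl_union_self _
  · simp

lemma edgeSet_nonempty_of_isBipartition [Finite V] {A B : Set V} (hconn : G.Connected)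
    (hbip : IsBipartition G A B) (hAB : A.ncard = B.ncard) : G.edgeSet.Nonempty := by
  obtain ⟨v⟩ := hconn.nonempty
  have hA : 0 < A.ncard := by
    rcases hbip.1 ▸ mem_univ v with h | h
    exacts [(ncard_pos (toFinite _)).2 ⟨v, h⟩, hAB ▸ (ncard_pos (toFinite _)).2 ⟨v, h⟩]
  obtain ⟨a, ha⟩ := (ncard_pos (toFinite _)).1 hA
  obtain ⟨b, hb⟩ := (ncard_pos (toFinite _)).1 (hAB ▸ hA)
  have : Nontrivial V := ⟨a, b, hbip.isBipartiteWith.disjoint.ne_of_mem ha hb⟩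
  obtain ⟨w, hvw⟩ := hconn.preconnected.exists_adj_of_nontrivial v
  exact ⟨s(v, w), hvw⟩

theorem isMatchingCovered_of_hasPerfectMatching_induce [Finite V] {A B : Set V}
    (hconn : G.Connected) (hbip : IsBipartition G A B) (hAB : A.ncard = B.ncard)
    (h : ∀ a ∈ A, ∀ b ∈ B, HasPerfectMatching (G.induce ({a, b}ᶜ : Set V))) :
    IsMatchingCovered G := by
  refine ⟨hconn, edgeSet_nonempty_of_isBipartition hconn hbip hAB,
    Sym2.ind fun u w huw => ?_⟩
  rcases hbip.2.2 u w huw with ⟨hu, hw⟩ | ⟨hu, hw⟩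
  · exact exists_isPerfectMatching_mem_edgeSet_of_induce huw (h u hu w hw)
  · rw [Sym2.eq_swap]
    exact exists_isPerfectMatching_mem_edgeSet_of_induce huw.symm (h w hw u hu)

end

/-- For a connected bipartite graph `G[A,B]` with `|A| = |B|`, the
following are equivalent: (i) `G` is matching covered; (ii) `|N_G(Z)| ≥ |Z| + 1` for
every nonempty proper subset `Z` of `A`; (iii) `G − a − b` has a perfect matching for
each pair `a ∈ A`, `b ∈ B`. -/
theorem statement0 {V : Type*} [Fintype V] (G : SimpleGraph V) (A B : Set V)
    (hconn : G.Connected) (hbip : IsBipartition G A B) (hAB : A.ncard = B.ncard) :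
    (IsMatchingCovered G ↔
      ∀ Z : Set V, Z ⊆ A → Z.Nonempty → Z ≠ A → Z.ncard + 1 ≤ (setNbhd G Z).ncard) ∧
    (IsMatchingCovered G ↔
      ∀ a ∈ A, ∀ b ∈ B, HasPerfectMatching (G.induce ({a, b}ᶜ : Set V))) := by
  have h12 (hG : IsMatchingCovered G) :
      ∀ Z : Set V, Z ⊆ A → Z.Nonempty → Z ≠ A → Z.ncard + 1 ≤ (setNbhd G Z).ncard :=
    fun _ => hG.add_one_le_ncard_setNbhd hbip.isBipartiteWith
  have h23 (hHall : ∀ Z : Set V, Z ⊆ A → Z.Nonempty → Z ≠ A →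
      Z.ncard + 1 ≤ (setNbhd G Z).ncard) :
      ∀ a ∈ A, ∀ b ∈ B, HasPerfectMatching (G.induce ({a, b}ᶜ : Set V)) :=
    fun _ ha _ hb => hasPerfectMatching_induce_compl_pair hbip hAB hHall ha hb
  have h31 := isMatchingCovered_of_hasPerfectMatching_induce hconn hbip hAB
  exact ⟨⟨h12, h31 ∘ h23⟩, ⟨h23 ∘ h12, h31⟩⟩

end MinimalBraces
end

section
/- Let G be a connected bipartite graph of order six or more with color classes A and B satisfying |A| = |B|. Then the following four statements are equivalent: (i) G is a brace; (ii) |N_G(Z)| ≥ |Z| + 2 for every nonempty subset Z of A with |Z| < |A| − 1; (iii) for any four distinct vertices a₁, a₂ ∈ A and b₁, b₂ ∈ B, the graph G − a₁ − a₂ − b₁ − b₂ has a perfect matching; (iv) G is 2-extendable, i.e., G has a matching of size two and every matching of size two extends to a perfect matching of G. -/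
namespace SimpleGraph.Subgraph.IsPerfectMatching

variable {V : Type*} {G : SimpleGraph V} {M : G.Subgraph} (hM : M.IsPerfectMatching)

noncomputable def partner (v : V) : V :=
  (isPerfectMatching_iff.mp hM v).choose

lemma adj_partner (v : V) : M.Adj v (hM.partner v) :=
  (isPerfectMatching_iff.mp hM v).choose_spec.1

lemma partner_eq_of_adj {v w : V} (h : M.Adj v w) : hM.partner v = w :=
  ((isPerfectMatching_iff.mp hM v).choose_spec.2 w h).symm

lemma graph_adj_partner (v : V) : G.Adj v (hM.partner v) :=
  M.adj_sub (hM.adj_partner v)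

lemma partner_involutive : Function.Involutive hM.partner :=
  fun v => hM.partner_eq_of_adj (hM.adj_partner v).symm

lemma partner_injective : Function.Injective hM.partner :=
  hM.partner_involutive.injective

end SimpleGraph.Subgraph.IsPerfectMatching

namespace MinimalBraces

open SimpleGraph

section

variable {V : Type*} {G : SimpleGraph V} {A B X Z : Set V}

def HasSurplusTwo (G : SimpleGraph V) (A : Set V) : Prop :=
  ∀ Z ⊆ A, Z.Nonempty → Z.ncard < A.ncard - 1 → Z.ncard + 2 ≤ (setNbhd G Z).ncard

def PairDeletionMatchable (G : SimpleGraph V) (A B : Set V) : Prop :=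
  ∀ a₁ ∈ A, ∀ a₂ ∈ A, ∀ b₁ ∈ B, ∀ b₂ ∈ B, a₁ ≠ a₂ → b₁ ≠ b₂ →
    HasPerfectMatching (G.induce ({a₁, a₂, b₁, b₂}ᶜ : Set V))

namespace IsBipartition

lemma symm (h : IsBipartition G A B) : IsBipartition G B A :=
  ⟨Set.union_comm A B ▸ h.1, Set.inter_comm A B ▸ h.2.1, fun u v huv => (h.2.2 u v huv).symm⟩

lemma disjoint (h : IsBipartition G A B) : Disjoint A B :=
  Set.disjoint_iff_inter_eq_empty.mpr h.2.1

lemma mem_or_mem (h : IsBipartition G A B) (v : V) : v ∈ A ∨ v ∈ B :=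
  Set.mem_union v A B |>.mp (h.1 ▸ Set.mem_univ v)

lemma notMem_right (h : IsBipartition G A B) {v : V} (hv : v ∈ A) : v ∉ B :=
  h.disjoint.notMem_of_mem_left hv

lemma mem_right_of_adj (h : IsBipartition G A B) {u v : V} (hu : u ∈ A) (huv : G.Adj u v) :
    v ∈ B :=
  ((h.2.2 u v huv).resolve_right fun h' => h.notMem_right hu h'.1).2

lemma setNbhd_subset (h : IsBipartition G A B) (hZ : Z ⊆ A) : setNbhd G Z ⊆ B := by
  rintro v ⟨z, hz, hzv⟩
  exact h.mem_right_of_adj (hZ hz) hzv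

lemma ncard_eq_add [Finite V] (h : IsBipartition G A B) (Y : Set V) :
    Y.ncard = (A ∩ Y).ncard + (B ∩ Y).ncard := by
  rw [← Set.ncard_union_eq (h.disjoint.mono Set.inter_subset_left Set.inter_subset_left),
    ← Set.union_inter_distrib_right, h.1, Set.univ_inter]

lemma edges_disjoint (h : IsBipartition G A B) {a a' b b' : V} (ha : a ∈ A) (ha' : a' ∈ A)
    (hb : b ∈ B) (hb' : b' ∈ B) (haa' : a ≠ a') (hbb' : b ≠ b') :
    ∀ v, ¬(v ∈ s(a, b) ∧ v ∈ s(a', b')) := by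
  rintro v ⟨hv, hv'⟩
  rw [Sym2.mem_iff] at hv hv'
  rcases hv with rfl | rfl <;> rcases hv' with rfl | rfl
  exacts [haa' rfl, h.notMem_right ha hb', h.notMem_right ha' hb, hbb' rfl]

lemma exists_eq_mk_of_mem_edgeSet (h : IsBipartition G A B) {e : Sym2 V} (he : e ∈ G.edgeSet) :
    ∃ a b, e = s(a, b) ∧ a ∈ A ∧ b ∈ B ∧ G.Adj a b := by
  induction e using Sym2.ind with
  | h x y =>
    rcases h.2.2 x y he with ⟨hx, hy⟩ | ⟨hx, hy⟩
    · exact ⟨x, y, rfl, hx, hy, he⟩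
    · exact ⟨y, x, Sym2.eq_swap, hy, hx, he.symm⟩

end IsBipartition

lemma image_partner_subset_setNbhd {M : G.Subgraph} (hM : M.IsPerfectMatching) :
    hM.partner '' Z ⊆ setNbhd G Z := by
  rintro _ ⟨z, hz, rfl⟩
  exact ⟨z, hz, hM.graph_adj_partner z⟩

lemma ncard_add_ncard_le_ncard_setNbhd [Finite V] {M : G.Subgraph} (hM : M.IsPerfectMatching)
    {T : Set V} (hT : T ⊆ setNbhd G Z) (hTZ : ∀ b ∈ T, hM.partner b ∉ Z) :
    Z.ncard + T.ncard ≤ (setNbhd G Z).ncard := by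
  have hdisj : Disjoint (hM.partner '' Z) T := by
    refine Set.disjoint_left.mpr ?_
    rintro _ ⟨z, hz, rfl⟩ hzT
    exact hTZ _ hzT (by rwa [hM.partner_involutive])
  calc Z.ncard + T.ncard = (hM.partner '' Z ∪ T).ncard := by
        rw [Set.ncard_union_eq hdisj, Set.ncard_image_of_injective _ hM.partner_injective]
    _ ≤ (setNbhd G Z).ncard :=
        Set.ncard_le_ncard (Set.union_subset (image_partner_subset_setNbhd hM) hT)

lemma exists_adj_setNbhd_of_notMem (hconn : G.Connected) (hZ : Z.Nonempty) {a : V}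
    (ha : a ∉ Z ∪ setNbhd G Z) : ∃ u ∈ setNbhd G Z, ∃ v ∉ Z, G.Adj u v := by
  obtain ⟨z, hz⟩ := hZ
  obtain ⟨d, -, hd, hd'⟩ :=
    (hconn z a).some.exists_boundary_dart (Z ∪ setNbhd G Z) (Or.inl hz) ha
  rcases hd with hd | hd
  · exact absurd (Or.inr ⟨_, hd, d.adj⟩) hd'
  · exact ⟨_, hd, _, fun h => hd' (Or.inl h), d.adj⟩

lemma ncard_lt_ncard_setNbhd [Finite V] (hmc : IsMatchingCovered G) (hbip : IsBipartition G A B)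
    (hZA : Z ⊆ A) (hZ : Z.Nonempty) (hZA' : Z ≠ A) : Z.ncard < (setNbhd G Z).ncard := by
  obtain ⟨a, haA, haZ⟩ := Set.not_subset.mp fun h => hZA' (hZA.antisymm h)
  obtain ⟨u, hu, v, hv, huv⟩ := exists_adj_setNbhd_of_notMem hmc.1 hZ (a := a) <| by
    rintro (h | h)
    exacts [haZ h, hbip.notMem_right haA (hbip.setNbhd_subset hZA h)]
  obtain ⟨M, hM, huvM⟩ := hmc.2.2 s(u, v) huv
  have := ncard_add_ncard_le_ncard_setNbhd hM (Set.singleton_subset_iff.mpr hu)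
    (by rintro b rfl; rwa [hM.partner_eq_of_adj huvM])
  rw [Set.ncard_singleton] at this
  omega

lemma cutEdges_compl : cutEdges G Xᶜ = cutEdges G X := by
  ext e
  constructor <;> rintro ⟨he, u, v, rfl, hu, hv⟩
  · exact ⟨he, v, u, Sym2.eq_swap, not_not.mp hv, hu⟩
  · exact ⟨he, v, u, Sym2.eq_swap, hv, not_not.mpr hu⟩

lemma IsTightCut.compl (ht : IsTightCut G X) : IsTightCut G Xᶜ := by
  simpa only [IsTightCut, cutEdges_compl] using ht

lemma isTrivialShore_compl : IsTrivialShore Xᶜ ↔ IsTrivialShore X := by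
  rw [IsTrivialShore, IsTrivialShore, compl_compl, or_comm]

lemma ncard_edgeSet_inter_cutEdges {M : G.Subgraph} (hM : M.IsPerfectMatching) (X : Set V) :
    (M.edgeSet ∩ cutEdges G X).ncard = {u ∈ X | hM.partner u ∉ X}.ncard := by
  have himage : M.edgeSet ∩ cutEdges G X =
      (fun u => s(u, hM.partner u)) '' {u ∈ X | hM.partner u ∉ X} := by
    ext e
    constructor
    · rintro ⟨heM, -, u, v, rfl, hu, hv⟩
      have hpu := hM.partner_eq_of_adj (Subgraph.mem_edgeSet.mp heM)
      exact ⟨u, ⟨hu, hpu ▸ hv⟩, by simp only [hpu]⟩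
    · rintro ⟨u, ⟨hu, hpu⟩, rfl⟩
      exact ⟨hM.adj_partner u, hM.graph_adj_partner u, u, _, rfl, hu, hpu⟩
  rw [himage, Set.InjOn.ncard_image]
  rintro u ⟨hu, -⟩ w ⟨-, hpw⟩ h
  rcases Sym2.eq_iff.mp h with ⟨h, -⟩ | ⟨h, -⟩
  exacts [h, absurd (h ▸ hu) hpw]

lemma IsTightCut.partner_mem (ht : IsTightCut G X) {M : G.Subgraph} (hM : M.IsPerfectMatching)
    {u : V} (hu : u ∈ X) (hpu : hM.partner u ∉ X) {x : V} (hx : x ∈ X) (hxu : x ≠ u) :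
    hM.partner x ∈ X := by
  by_contra hpx
  obtain ⟨w, hw⟩ := Set.ncard_eq_one.mp ((ncard_edgeSet_inter_cutEdges hM X).symm.trans (ht M hM))
  have hu' : u ∈ ({w} : Set V) := hw ▸ ⟨hu, hpu⟩
  have hx' : x ∈ ({w} : Set V) := hw ▸ ⟨hx, hpx⟩
  exact hxu (hx'.trans hu'.symm)

lemma IsTightCut.ncard_inter_eq_add_one [Finite V] (ht : IsTightCut G X)
    (hbip : IsBipartition G A B) {M : G.Subgraph} (hM : M.IsPerfectMatching) {u : V}
    (hu : u ∈ X) (huA : u ∈ A) (hpu : hM.partner u ∉ X) :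
    (A ∩ X).ncard = (B ∩ X).ncard + 1 := by
  have hA_le_B : ((A ∩ X) \ {u}).ncard ≤ (B ∩ X).ncard := by
    refine Set.ncard_le_ncard_of_injOn hM.partner ?_ hM.partner_injective.injOn
    rintro x ⟨⟨hxA, hxX⟩, hxu⟩
    exact ⟨hbip.mem_right_of_adj hxA (hM.graph_adj_partner x), ht.partner_mem hM hu hpu hxX hxu⟩
  have hB_le_A : (B ∩ X).ncard ≤ ((A ∩ X) \ {u}).ncard := by
    refine Set.ncard_le_ncard_of_injOn hM.partner ?_ hM.partner_injective.injOn
    rintro x ⟨hxB, hxX⟩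
    refine ⟨⟨hbip.symm.mem_right_of_adj hxB (hM.graph_adj_partner x),
      ht.partner_mem hM hu hpu hxX fun h => hbip.notMem_right huA (h ▸ hxB)⟩, ?_⟩
    rintro (h : hM.partner x = u)
    exact hpu (h ▸ (hM.partner_involutive x).symm ▸ hxX)
  rw [Set.ncard_sdiff_singleton_of_mem (show u ∈ A ∩ X from ⟨huA, hu⟩)] at hA_le_B hB_le_A
  have := (Set.ncard_pos (s := A ∩ X)).mpr ⟨u, huA, hu⟩
  omega

lemma IsTightCut.isTrivialShore_of_mem_left [Finite V] (ht : IsTightCut G X)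
    (hbip : IsBipartition G A B) (hAB : A.ncard = B.ncard) (hmc : IsMatchingCovered G)
    (hii : HasSurplusTwo G A) {M : G.Subgraph} (hM : M.IsPerfectMatching) {u : V}
    (hu : u ∈ X) (huA : u ∈ A) (hpu : hM.partner u ∉ X) : IsTrivialShore X := by
  have hcount := ht.ncard_inter_eq_add_one hbip hM hu huA hpu
  -- an edge from `A \ X` to `B ∩ X` would be the cut edge of a perfect matching leaving `X`
  -- from `B`, which reverses the count
  have hnbhd : setNbhd G (A \ X) ⊆ B \ X := by
    rintro w ⟨a, ⟨haA, haX⟩, haw⟩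
    have hwB := hbip.mem_right_of_adj haA haw
    refine ⟨hwB, fun hwX => ?_⟩
    obtain ⟨M', hM', hwa⟩ := hmc.2.2 s(w, a) haw.symm
    have := ht.ncard_inter_eq_add_one hbip.symm hM' hwX hwB (by rwa [hM'.partner_eq_of_adj hwa])
    omega
  have hA := Set.ncard_inter_add_ncard_sdiff_eq_ncard A X
  have hB := Set.ncard_inter_add_ncard_sdiff_eq_ncard B X
  have hX := hbip.ncard_eq_add X
  have hXc := hbip.ncard_eq_add Xᶜ
  rw [← Set.sdiff_eq, ← Set.sdiff_eq] at hXc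
  have huX := (Set.ncard_pos (s := A ∩ X)).mpr ⟨u, huA, hu⟩
  rcases (A \ X).eq_empty_or_nonempty with hZ | hZ
  · rw [hZ, Set.ncard_empty] at hXc hA
    exact Or.inr (Set.ncard_eq_one.mp (by omega))
  · by_cases hsmall : (A \ X).ncard < A.ncard - 1
    · have := hii _ Set.sdiff_subset hZ hsmall
      have := Set.ncard_le_ncard hnbhd
      omega
    · exact Or.inl (Set.ncard_eq_one.mp (by omega))

lemma isTrivialShore_of_isTightCut [Finite V] (hbip : IsBipartition G A B)
    (hAB : A.ncard = B.ncard) (hmc : IsMatchingCovered G) (hii : HasSurplusTwo G A)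
    (ht : IsTightCut G X) : IsTrivialShore X := by
  obtain ⟨e, he⟩ := hmc.2.1
  obtain ⟨M, hM, -⟩ := hmc.2.2 e he
  obtain ⟨u, hu, hpu⟩ : ∃ u ∈ X, hM.partner u ∉ X :=
    Set.nonempty_of_ncard_ne_zero (s := {u ∈ X | hM.partner u ∉ X}) <| by
      rw [← ncard_edgeSet_inter_cutEdges hM X, ht M hM]; exact one_ne_zero
  rcases hbip.mem_or_mem u with huA | huB
  · exact ht.isTrivialShore_of_mem_left hbip hAB hmc hii hM hu huA hpu
  · rw [← isTrivialShore_compl]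
    refine ht.compl.isTrivialShore_of_mem_left hbip hAB hmc hii hM hpu
      (hbip.symm.mem_right_of_adj huB (hM.graph_adj_partner u)) ?_
    rwa [hM.partner_involutive, Set.mem_compl_iff, not_not]

lemma isTightCut_union_setNbhd [Finite V] (hbip : IsBipartition G A B) (hZA : Z ⊆ A)
    (hW : (setNbhd G Z).ncard = Z.ncard + 1) : IsTightCut G (Z ∪ setNbhd G Z) := by
  intro M hM
  have hleave : {u ∈ Z ∪ setNbhd G Z | hM.partner u ∉ Z ∪ setNbhd G Z} =
      setNbhd G Z \ hM.partner '' Z := by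
    ext u
    constructor
    · rintro ⟨hu | hu, hpu⟩
      · exact absurd (Or.inr ⟨u, hu, hM.graph_adj_partner u⟩) hpu
      · refine ⟨hu, ?_⟩
        rintro ⟨z, hz, rfl⟩
        exact hpu (Or.inl (by rwa [hM.partner_involutive]))
    · rintro ⟨hu, hpu⟩
      refine ⟨Or.inr hu, ?_⟩
      rintro (h | h)
      · exact hpu ⟨_, h, hM.partner_involutive u⟩
      · exact hbip.notMem_right (hbip.symm.mem_right_of_adj (hbip.setNbhd_subset hZA hu)
          (hM.graph_adj_partner u)) (hbip.setNbhd_subset hZA h)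
  rw [ncard_edgeSet_inter_cutEdges hM, hleave, Set.ncard_sdiff (image_partner_subset_setNbhd hM),
    Set.ncard_image_of_injective _ hM.partner_injective, hW, Nat.add_sub_cancel_left]

lemma hasSurplusTwo_of_isBrace [Finite V] (hbip : IsBipartition G A B) (hAB : A.ncard = B.ncard)
    (hbrace : IsBrace G) : HasSurplusTwo G A := by
  intro Z hZA hZne hZsm
  have hlt := ncard_lt_ncard_setNbhd hbrace.2.1 hbip hZA hZne (by rintro rfl; omega)
  by_contra hle
  have hW : (setNbhd G Z).ncard = Z.ncard + 1 := by omega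
  have hX : (Z ∪ setNbhd G Z).ncard = Z.ncard + (setNbhd G Z).ncard :=
    Set.ncard_union_eq (Set.disjoint_left.mpr fun _ hz hw =>
      hbip.notMem_right (hZA hz) (hbip.setNbhd_subset hZA hw))
  have hXc := Set.ncard_add_ncard_compl (Z ∪ setNbhd G Z)
  have hV := hbip.ncard_eq_add Set.univ
  rw [Set.ncard_univ, Set.inter_univ, Set.inter_univ] at hV
  have := (Set.ncard_pos (s := Z)).mpr hZne
  rcases hbrace.2.2 _ (isTightCut_union_setNbhd hbip hZA hW) with ⟨v, hv⟩ | ⟨v, hv⟩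
  · rw [hv, Set.ncard_singleton] at hX
    omega
  · rw [hv, Set.ncard_singleton] at hXc
    omega

lemma hasPerfectMatching_of_forall_ncard_le [Finite V] (hbip : IsBipartition G A B)
    (hcard : A.ncard = B.ncard) (hall : ∀ Z ⊆ A, Z.ncard ≤ (setNbhd G Z).ncard) :
    HasPerfectMatching G := by
  classical
  cases nonempty_fintype V
  obtain ⟨f, hf, hfadj⟩ := (Finset.all_card_le_biUnion_card_iff_exists_injective
      fun a : A => G.neighborFinset a).mp fun s => by
    have := hall (s.image Subtype.val) (by simp)
    rw [Set.ncard_coe_finset, Finset.card_image_of_injective _ Subtype.val_injective] at this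
    convert this using 1
    rw [← Set.ncard_coe_finset]
    congr 1
    ext v
    simp [setNbhd]
  have hfB (a : A) : f a ∈ B := hbip.mem_right_of_adj a.2 ((G.mem_neighborFinset _ _).mp (hfadj a))
  let g : A → B := fun a => ⟨f a, hfB a⟩
  have hg : g.Bijective := (Fintype.bijective_iff_injective_and_card g).mpr
    ⟨fun a b h => hf (congrArg Subtype.val h), by
      rw [← Nat.card_eq_fintype_card, ← Nat.card_eq_fintype_card, Nat.card_coe_set_eq,
        Nat.card_coe_set_eq, hcard]⟩
  obtain ⟨M, hMverts, hM⟩ := Subgraph.IsMatching.exists_of_disjoint_sets_of_equiv hbip.disjoint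
    (Equiv.ofBijective g hg) fun a => (G.mem_neighborFinset _ _).mp (hfadj a)
  exact ⟨M, hM, Subgraph.isSpanning_iff.mpr (hMverts.trans hbip.1)⟩

lemma hasPerfectMatching_induce_of_forall_ncard_le [Finite V] (hbip : IsBipartition G A B)
    (S : Set V) (hcard : (A ∩ S).ncard = (B ∩ S).ncard)
    (hall : ∀ Z ⊆ A ∩ S, Z.ncard ≤ (setNbhd G Z ∩ S).ncard) :
    HasPerfectMatching (G.induce S) := by
  have hbipS : IsBipartition (G.induce S) (Subtype.val ⁻¹' A) (Subtype.val ⁻¹' B) :=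
    ⟨by rw [← Set.preimage_union, hbip.1, Set.preimage_univ],
      by rw [← Set.preimage_inter, hbip.2.1, Set.preimage_empty],
      fun u v huv => hbip.2.2 u v huv⟩
  have hval (T : Set V) : (Subtype.val ⁻¹' T : Set S).ncard = (T ∩ S).ncard := by
    rw [← Set.ncard_image_of_injective _ Subtype.val_injective, Subtype.image_preimage_coe,
      Set.inter_comm]
  refine hasPerfectMatching_of_forall_ncard_le hbipS (by rw [hval, hval, hcard]) fun Z hZ => ?_
  have himage : Subtype.val '' setNbhd (G.induce S) Z = setNbhd G (Subtype.val '' Z) ∩ S := by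
    ext v
    simp [setNbhd]
  rw [← Set.ncard_image_of_injective Z Subtype.val_injective,
    ← Set.ncard_image_of_injective _ Subtype.val_injective, himage]
  exact hall _ (by rintro _ ⟨z, hz, rfl⟩; exact ⟨hZ hz, z.2⟩)

lemma pairDeletionMatchable_of_hasSurplusTwo [Finite V] (hbip : IsBipartition G A B)
    (hAB : A.ncard = B.ncard) (hii : HasSurplusTwo G A) : PairDeletionMatchable G A B := by
  intro a₁ ha₁ a₂ ha₂ b₁ hb₁ b₂ hb₂ ha hb
  have hA : A ∩ {a₁, a₂, b₁, b₂}ᶜ = A \ {a₁, a₂} := by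
    ext v
    have := hbip.notMem_right (v := v)
    grind
  have hB : B ∩ {a₁, a₂, b₁, b₂}ᶜ = B \ {b₁, b₂} := by
    ext v
    have := hbip.symm.notMem_right (v := v)
    grind
  have hpairA : ({a₁, a₂} : Set V) ⊆ A := Set.insert_subset ha₁ (Set.singleton_subset_iff.mpr ha₂)
  have hpairB : ({b₁, b₂} : Set V) ⊆ B := Set.insert_subset hb₁ (Set.singleton_subset_iff.mpr hb₂)
  have hA2 := Set.ncard_le_ncard hpairA
  rw [Set.ncard_pair ha] at hA2
  refine hasPerfectMatching_induce_of_forall_ncard_le hbip _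
    (by rw [hA, hB, Set.ncard_sdiff hpairA, Set.ncard_sdiff hpairB, Set.ncard_pair ha,
      Set.ncard_pair hb, hAB]) fun Z hZ => ?_
  rcases Z.eq_empty_or_nonempty with rfl | hZne
  · simp
  rw [hA] at hZ
  have hZsm := Set.ncard_le_ncard hZ
  rw [Set.ncard_sdiff hpairA, Set.ncard_pair ha] at hZsm
  have hsurplus := hii Z (hZ.trans Set.sdiff_subset) hZne (by omega)
  have hsub : setNbhd G Z \ {b₁, b₂} ⊆ setNbhd G Z ∩ {a₁, a₂, b₁, b₂}ᶜ := by
    rintro v ⟨hv, hvb⟩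
    have := hbip.notMem_right (v := v)
    have := hbip.setNbhd_subset (hZ.trans Set.sdiff_subset) hv
    grind
  have hdel := Set.le_ncard_sdiff {b₁, b₂} (setNbhd G Z)
  rw [Set.ncard_pair hb] at hdel
  have := Set.ncard_le_ncard hsub
  omega

lemma exists_isPerfectMatching_of_induce {a₁ a₂ b₁ b₂ : V} (h₁ : G.Adj a₁ b₁) (h₂ : G.Adj a₂ b₂)
    (hdisj : ∀ v, ¬(v ∈ s(a₁, b₁) ∧ v ∈ s(a₂, b₂)))
    (hpm : HasPerfectMatching (G.induce ({a₁, a₂, b₁, b₂}ᶜ : Set V))) :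
    ∃ N : G.Subgraph, N.IsPerfectMatching ∧ N.Adj a₁ b₁ ∧ N.Adj a₂ b₂ := by
  have ha₁ := hdisj a₁
  have hb₁ := hdisj b₁
  simp only [Sym2.mem_iff] at ha₁ hb₁
  obtain ⟨M, hM⟩ := hpm
  let e := Embedding.induce (G := G) ({a₁, a₂, b₁, b₂}ᶜ : Set V)
  have he : Set.range e = {a₁, a₂, b₁, b₂}ᶜ := Subtype.range_coe
  have hM₀ : (M.map e.toHom).IsMatching := hM.1.map _ e.injective
  have hM₁ : (G.subgraphOfAdj h₁ ⊔ G.subgraphOfAdj h₂).IsMatching :=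
    (Subgraph.IsMatching.subgraphOfAdj h₁).sup (Subgraph.IsMatching.subgraphOfAdj h₂) <| by
      rw [(Subgraph.IsMatching.subgraphOfAdj h₁).support_eq_verts,
        (Subgraph.IsMatching.subgraphOfAdj h₂).support_eq_verts]
      simp only [subgraphOfAdj_verts, Set.disjoint_insert_left, Set.disjoint_insert_right,
        Set.disjoint_singleton, Set.mem_insert_iff, Set.mem_singleton_iff]
      grind
  refine ⟨M.map e.toHom ⊔ (G.subgraphOfAdj h₁ ⊔ G.subgraphOfAdj h₂),
    ⟨hM₀.sup hM₁ ?_, ?_⟩, by simp, by simp⟩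
  · rw [hM₀.support_eq_verts, hM₁.support_eq_verts]
    simp [hM.2.verts_eq_univ, he]
  · rw [Subgraph.isSpanning_iff, Subgraph.verts_sup, Subgraph.map_verts, hM.2.verts_eq_univ,
      Set.image_univ, Set.eq_univ_iff_forall]
    intro v
    by_cases hv : v ∈ ({a₁, a₂, b₁, b₂}ᶜ : Set V)
    · exact Or.inl ⟨⟨v, hv⟩, rfl⟩
    · simp only [Set.mem_compl_iff, not_not] at hv
      right
      simp only [Subgraph.verts_sup, subgraphOfAdj_verts]
      grind

lemma exists_adj_of_hasPerfectMatching_induce {S : Set V} (hpm : HasPerfectMatching (G.induce S))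
    {v : V} (hv : v ∈ S) : ∃ w ∈ S, G.Adj v w := by
  obtain ⟨M, hM⟩ := hpm
  obtain ⟨w, hw, -⟩ := Subgraph.isPerfectMatching_iff.mp hM ⟨v, hv⟩
  exact ⟨w, w.2, M.adj_sub hw⟩

lemma isMatchingSet_pair {e f : Sym2 V} (he : e ∈ G.edgeSet) (hf : f ∈ G.edgeSet)
    (hef : ∀ v, ¬(v ∈ e ∧ v ∈ f)) : IsMatchingSet G {e, f} := by
  refine ⟨Set.insert_subset he (Set.singleton_subset_iff.mpr hf), ?_⟩
  rintro e₁ (rfl | rfl) e₂ (rfl | rfl) hne v hv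
  exacts [hne rfl, hef v hv, hef v hv.symm, hne rfl]

lemma IsTwoExtendable.exists_isPerfectMatching (h2e : IsTwoExtendable G) {a b c d : V}
    (hab : G.Adj a b) (hcd : G.Adj c d) (hdisj : ∀ v, ¬(v ∈ s(a, b) ∧ v ∈ s(c, d))) :
    ∃ N : G.Subgraph, N.IsPerfectMatching ∧ N.Adj a b ∧ N.Adj c d := by
  have hne : s(a, b) ≠ s(c, d) := fun h => hdisj a ⟨Sym2.mem_mk_left a b, h ▸ Sym2.mem_mk_left a b⟩
  obtain ⟨N, hN, hsub⟩ := h2e.2 _ (isMatchingSet_pair hab hcd hdisj) (Set.ncard_pair hne)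
  exact ⟨N, hN, hsub (Set.mem_insert _ _), hsub (Set.mem_insert_of_mem _ rfl)⟩

lemma exists_isMatchingSet_ncard_two [Finite V] (hbip : IsBipartition G A B) (hA : 2 < A.ncard)
    (hB : 1 < B.ncard) (hiii : PairDeletionMatchable G A B) :
    ∃ M, IsMatchingSet G M ∧ M.ncard = 2 := by
  obtain ⟨a₁, a₂, a₃, ha₁, ha₂, ha₃, h12, h13, h23⟩ := (Set.two_lt_ncard_iff).mp hA
  obtain ⟨b₁, b₂, hb₁, hb₂, hb12⟩ := (Set.one_lt_ncard_iff).mp hB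
  obtain ⟨b₃, hb₃, h₃⟩ := exists_adj_of_hasPerfectMatching_induce
    (hiii a₁ ha₁ a₂ ha₂ b₁ hb₁ b₂ hb₂ h12 hb12) (v := a₃) <| by
      have := hbip.notMem_right ha₃
      grind
  have hb₃B := hbip.mem_right_of_adj ha₃ h₃
  obtain ⟨b₄, hb₄, h₄⟩ := exists_adj_of_hasPerfectMatching_induce
    (hiii a₂ ha₂ a₃ ha₃ b₂ hb₂ b₃ hb₃B h23 (by grind)) (v := a₁) <| by
      have := hbip.notMem_right ha₁
      grind
  have hdisj := hbip.edges_disjoint ha₃ ha₁ hb₃B (hbip.mem_right_of_adj ha₁ h₄) h13.symm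
    (by grind)
  have hne : s(a₃, b₃) ≠ s(a₁, b₄) :=
    fun h => hdisj a₃ ⟨Sym2.mem_mk_left _ _, h ▸ Sym2.mem_mk_left _ _⟩
  exact ⟨_, isMatchingSet_pair h₃ h₄ hdisj, Set.ncard_pair hne⟩

lemma isTwoExtendable_of_pairDeletionMatchable [Finite V] (hbip : IsBipartition G A B)
    (hA : 2 < A.ncard) (hB : 1 < B.ncard) (hiii : PairDeletionMatchable G A B) :
    IsTwoExtendable G := by
  refine ⟨exists_isMatchingSet_ncard_two hbip hA hB hiii, fun M hM hM2 => ?_⟩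
  obtain ⟨e₁, e₂, hne, rfl⟩ := Set.ncard_eq_two.mp hM2
  obtain ⟨a₁, b₁, rfl, ha₁, hb₁, h₁⟩ :=
    hbip.exists_eq_mk_of_mem_edgeSet (hM.1 (Set.mem_insert _ _))
  obtain ⟨a₂, b₂, rfl, ha₂, hb₂, h₂⟩ :=
    hbip.exists_eq_mk_of_mem_edgeSet (hM.1 (Set.mem_insert_of_mem _ rfl))
  have hdisj := hM.2 _ (Set.mem_insert _ _) _ (Set.mem_insert_of_mem _ rfl) hne
  have ha : a₁ ≠ a₂ := fun h => hdisj a₁ ⟨Sym2.mem_mk_left _ _, h ▸ Sym2.mem_mk_left _ _⟩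
  have hb : b₁ ≠ b₂ := fun h => hdisj b₁ ⟨Sym2.mem_mk_right _ _, h ▸ Sym2.mem_mk_right _ _⟩
  obtain ⟨N, hN, hN₁, hN₂⟩ := exists_isPerfectMatching_of_induce h₁ h₂ hdisj
    (hiii a₁ ha₁ a₂ ha₂ b₁ hb₁ b₂ hb₂ ha hb)
  exact ⟨N, hN, Set.insert_subset hN₁ (Set.singleton_subset_iff.mpr hN₂)⟩

lemma isMatchingCovered_of_isTwoExtendable [Finite V] (hconn : G.Connected)
    (hV : 5 ≤ Nat.card V) (h2e : IsTwoExtendable G) : IsMatchingCovered G := by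
  obtain ⟨M, hM, hM2⟩ := h2e.1
  obtain ⟨N, hN, -⟩ := h2e.2 M hM hM2
  refine ⟨hconn, ?_, fun e he => ?_⟩
  · obtain ⟨e, he⟩ := Set.nonempty_of_ncard_ne_zero (s := M) (by omega)
    exact ⟨e, hM.1 he⟩
  obtain ⟨a, b⟩ := e
  obtain ⟨c, -, hc⟩ := Set.exists_mem_notMem_of_ncard_lt_ncard
    (s := {a, b, hN.partner a, hN.partner b}) (t := Set.univ) <| by
      have h₁ := Set.ncard_insert_le a {b, hN.partner a, hN.partner b}
      have h₂ := Set.ncard_insert_le b {hN.partner a, hN.partner b}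
      have h₃ := Set.ncard_insert_le (hN.partner a) {hN.partner b}
      rw [Set.ncard_singleton] at h₃
      rw [Set.ncard_univ]
      omega
  have hdisj : ∀ v, ¬(v ∈ s(a, b) ∧ v ∈ s(c, hN.partner c)) := by
    rintro v ⟨hv, hv'⟩
    rw [Sym2.mem_iff] at hv hv'
    have := hN.partner_involutive c
    grind
  obtain ⟨N', hN', hab, -⟩ := h2e.exists_isPerfectMatching he (hN.graph_adj_partner c) hdisj
  exact ⟨N', hN', hab⟩

lemma IsTwoExtendable.eq_or_eq_of_adj_setNbhd [Finite V] (h2e : IsTwoExtendable G)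
    (hbip : IsBipartition G A B) (hZA : Z ⊆ A) (hW : (setNbhd G Z).ncard ≤ Z.ncard + 1) :
    ∀ b₁ ∈ setNbhd G Z, ∀ b₂ ∈ setNbhd G Z, ∀ a₁ ∉ Z, ∀ a₂ ∉ Z,
      G.Adj b₁ a₁ → G.Adj b₂ a₂ → a₁ = a₂ ∨ b₁ = b₂ := by
  intro b₁ hb₁ b₂ hb₂ a₁ ha₁ a₂ ha₂ h₁ h₂
  by_contra! hne
  have hWB := hbip.setNbhd_subset hZA
  obtain ⟨N, hN, hN₁, hN₂⟩ := h2e.exists_isPerfectMatching h₁ h₂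
    (hbip.symm.edges_disjoint (hWB hb₁) (hWB hb₂) (hbip.symm.mem_right_of_adj (hWB hb₁) h₁)
      (hbip.symm.mem_right_of_adj (hWB hb₂) h₂) hne.2 hne.1)
  have := ncard_add_ncard_le_ncard_setNbhd hN (T := {b₁, b₂})
    (Set.insert_subset hb₁ (Set.singleton_subset_iff.mpr hb₂))
    (by rintro b (rfl | rfl) <;> rwa [hN.partner_eq_of_adj ‹_›])
  rw [Set.ncard_pair hne.2] at this
  omega

lemma ncard_sdiff_le_one_or_exists_setNbhd_subset [Finite V] {W : Set V}
    (hshare : ∀ b₁ ∈ W, ∀ b₂ ∈ W, ∀ a₁ ∉ Z, ∀ a₂ ∉ Z,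
      G.Adj b₁ a₁ → G.Adj b₂ a₂ → a₁ = a₂ ∨ b₁ = b₂) :
    (setNbhd G W \ Z).ncard ≤ 1 ∨ ∃ b ∈ W, setNbhd G (W \ {b}) ⊆ Z := by
  refine or_iff_not_imp_left.mpr fun h => ?_
  obtain ⟨a₁, a₂, ⟨⟨b₁, hb₁, h₁⟩, ha₁⟩, ⟨⟨b₂, hb₂, h₂⟩, ha₂⟩, ha⟩ :=
    (Set.one_lt_ncard_iff).mp (not_le.mp h)
  obtain rfl := (hshare b₁ hb₁ b₂ hb₂ a₁ ha₁ a₂ ha₂ h₁ h₂).resolve_left ha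
  refine ⟨b₁, hb₁, ?_⟩
  rintro a ⟨b, ⟨hb, hbb₁⟩, hba⟩
  by_contra haZ
  have h₁' := (hshare b hb b₁ hb₁ a haZ a₁ ha₁ hba h₁).resolve_right hbb₁
  have h₂' := (hshare b hb b₁ hb₁ a haZ a₂ ha₂ hba h₂).resolve_right hbb₁
  exact ha (h₁'.symm.trans h₂')

lemma hasSurplusTwo_of_isTwoExtendable [Finite V] (hconn : G.Connected)
    (hbip : IsBipartition G A B) (hAB : A.ncard = B.ncard) (hV : 5 ≤ Nat.card V)
    (h2e : IsTwoExtendable G) : HasSurplusTwo G A := by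
  have hmc := isMatchingCovered_of_isTwoExtendable hconn hV h2e
  intro Z hZA hZne hZsm
  have hWB := hbip.setNbhd_subset hZA
  have hlt := ncard_lt_ncard_setNbhd hmc hbip hZA hZne (by rintro rfl; omega)
  by_contra! hle
  have hZpos := (Set.ncard_pos (s := Z)).mpr hZne
  have hne_B : ∀ Y ⊆ setNbhd G Z, Y ≠ B := by
    rintro Y hY rfl
    have := Set.ncard_le_ncard hY
    omega
  rcases ncard_sdiff_le_one_or_exists_setNbhd_subset
    (h2e.eq_or_eq_of_adj_setNbhd hbip hZA (by omega)) with hle₁ | ⟨b, hb, hsub⟩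
  · have := ncard_lt_ncard_setNbhd hmc hbip.symm hWB
      (Set.nonempty_of_ncard_ne_zero (by omega)) (hne_B _ subset_rfl)
    have := Set.ncard_le_ncard_sdiff_add_ncard (setNbhd G (setNbhd G Z)) Z
    omega
  · have := ncard_lt_ncard_setNbhd hmc hbip.symm (Set.sdiff_subset.trans hWB)
      (Set.nonempty_of_ncard_ne_zero (by rw [Set.ncard_sdiff_singleton_of_mem hb]; omega))
      (hne_B _ Set.sdiff_subset)
    rw [Set.ncard_sdiff_singleton_of_mem hb] at this
    have := Set.ncard_le_ncard hsub
    omega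

end

/-- For a connected bipartite graph `G[A,B]` of order six or more with
`|A| = |B|`, the following are equivalent: (i) `G` is a brace; (ii) `|N_G(Z)| ≥ |Z| + 2`
for every nonempty `Z ⊆ A` with `|Z| < |A| − 1`; (iii) `G − a₁ − a₂ − b₁ − b₂` has a
perfect matching for any distinct `a₁, a₂ ∈ A` and distinct `b₁, b₂ ∈ B`;
(iv) `G` is 2-extendable. -/
theorem statement2 {V : Type*} [Fintype V] (G : SimpleGraph V) (A B : Set V)
    (hconn : G.Connected) (hbip : IsBipartition G A B) (hAB : A.ncard = B.ncard)
    (horder : 6 ≤ Fintype.card V) :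
    (IsBrace G ↔
      ∀ Z : Set V, Z ⊆ A → Z.Nonempty → Z.ncard < A.ncard - 1 →
        Z.ncard + 2 ≤ (setNbhd G Z).ncard) ∧
    (IsBrace G ↔
      ∀ a₁ ∈ A, ∀ a₂ ∈ A, ∀ b₁ ∈ B, ∀ b₂ ∈ B, a₁ ≠ a₂ → b₁ ≠ b₂ →
        HasPerfectMatching (G.induce ({a₁, a₂, b₁, b₂}ᶜ : Set V))) ∧
    (IsBrace G ↔ IsTwoExtendable G) := by
  have hV := hbip.ncard_eq_add Set.univ
  rw [Set.ncard_univ, Nat.card_eq_fintype_card, Set.inter_univ, Set.inter_univ] at hV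
  have h12 : IsBrace G → HasSurplusTwo G A := hasSurplusTwo_of_isBrace hbip hAB
  have h23 : HasSurplusTwo G A → PairDeletionMatchable G A B :=
    pairDeletionMatchable_of_hasSurplusTwo hbip hAB
  have h34 : PairDeletionMatchable G A B → IsTwoExtendable G :=
    isTwoExtendable_of_pairDeletionMatchable hbip (by omega) (by omega)
  have h5 : 5 ≤ Nat.card V := by rw [Nat.card_eq_fintype_card]; omega
  have h42 : IsTwoExtendable G → HasSurplusTwo G A :=
    hasSurplusTwo_of_isTwoExtendable hconn hbip hAB h5
  have h21 : HasSurplusTwo G A → IsBrace G := fun hii =>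
    have hmc := isMatchingCovered_of_isTwoExtendable hconn h5 (h34 (h23 hii))
    ⟨⟨A, B, hbip⟩, hmc, fun _ ht => isTrivialShore_of_isTightCut hbip hAB hmc hii ht⟩
  exact ⟨⟨h12, h21⟩, ⟨h23 ∘ h12, h21 ∘ h42 ∘ h34⟩, ⟨h34 ∘ h23 ∘ h12, h21 ∘ h42⟩⟩

end MinimalBraces
end

section
/- Let G be a brace of order six or more. If the set of all noncubic vertices of G is a stable (independent) set, then G is a minimal brace. -/
namespace MinimalBraces

open SimpleGraph

-- auxiliary lemmas
lemma matching_unique {V : Type*} {G : SimpleGraph V} {M : G.Subgraph}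
    (hM : M.IsPerfectMatching) {a b c : V} (h1 : M.Adj a b) (h2 : M.Adj a c) : b = c := by
  obtain ⟨d, _, hd⟩ := hM.1 (hM.2 a)
  rw [hd b h1, hd c h2]

lemma walk_closed {V : Type*} {G : SimpleGraph V} {S : Set V}
    (hS : ∀ a ∈ S, ∀ b, G.Adj a b → b ∈ S) {x y : V} (p : G.Walk x y) (hx : x ∈ S) : y ∈ S := by
  induction p with
  | nil => exact hx
  | cons h q ih => exact ih (hS _ hx _ h)

lemma key_count {V : Type*} [Fintype V] (G : SimpleGraph V) (v u w : V)
    (hnbr : G.neighborSet v = {u, w}) (huw : u ≠ w) (M : G.Subgraph)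
    (hM : M.IsPerfectMatching) (hMv : M.Adj v u) :
    (M.edgeSet ∩ cutEdges G ({v, u, w} : Set V)).ncard = 1 := by
  have hGvu : G.Adj v u := by rw [← G.mem_neighborSet, hnbr]; left; rfl
  have hGvw : G.Adj v w := by rw [← G.mem_neighborSet, hnbr]; right; rfl
  obtain ⟨q, hq, _⟩ := hM.1 (hM.2 w)
  have hqv : q ≠ v := by
    rintro rfl
    exact huw (matching_unique hM hMv hq.symm)
  have hqu : q ≠ u := by
    rintro rfl
    exact hGvw.ne (matching_unique hM hMv.symm hq.symm)
  have hqw : q ≠ w := fun h => G.irrefl (h ▸ M.adj_sub hq)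
  have hset : M.edgeSet ∩ cutEdges G ({v, u, w} : Set V) = {s(w, q)} := by
    ext f
    constructor
    · rintro ⟨hfM, -, x, y, rfl, hx, hy⟩
      have hxy : M.Adj x y := hfM
      rcases hx with rfl | rfl | rfl
      · exact absurd (by right; left; exact matching_unique hM hxy hMv) hy
      · exact absurd (by left; exact matching_unique hM hxy hMv.symm) hy
      · rw [matching_unique hM hxy hq]; rfl
    · rintro rfl
      refine ⟨hq, M.adj_sub hq, w, q, rfl, by right; right; rfl, ?_⟩
      simp [hqv, hqu, hqw]
  rw [hset, Set.ncard_singleton]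

lemma brace_min_degree {V : Type*} [Fintype V] (G : SimpleGraph V)
    (hG : IsBrace G) (h6 : 6 ≤ Fintype.card V) (v : V) : 3 ≤ mdeg G v := by
  obtain ⟨-, ⟨hconn, -, hmc⟩, htight⟩ := hG
  by_contra hlt
  push_neg at hlt
  have hcard : ∀ S : Set V, Set.univ ⊆ S → 6 ≤ S.ncard := by
    intro S hS
    calc 6 ≤ Fintype.card V := h6
      _ = (Set.univ : Set V).ncard := by rw [Set.ncard_univ, Nat.card_eq_fintype_card]
      _ ≤ S.ncard := Set.ncard_le_ncard hS (Set.toFinite _)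
  interval_cases h : mdeg G v
  · -- degree 0
    have hemp : G.neighborSet v = ∅ := by
      rw [← Set.ncard_eq_zero (Set.toFinite _)]; exact h
    obtain ⟨u, hu⟩ := Fintype.exists_ne_of_one_lt_card (by omega) v
    obtain ⟨p⟩ := hconn.preconnected v u
    cases p with
    | nil => exact hu rfl
    | cons hadj q =>
      have : _ ∈ G.neighborSet v := hadj
      rw [hemp] at this; exact this
  · -- degree 1
    obtain ⟨u, hu⟩ := Set.ncard_eq_one.mp h
    have hvu : G.Adj v u := by rw [← G.mem_neighborSet, hu]; rfl
    by_cases hw : ∃ w, G.Adj u w ∧ w ≠ v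
    · obtain ⟨w, huw, hwv⟩ := hw
      obtain ⟨M, hM, hMe⟩ := hmc s(u, w) huw
      have hMuw : M.Adj u w := hMe
      obtain ⟨p, hp, -⟩ := hM.1 (hM.2 v)
      have hpu : p = u := by
        have : p ∈ G.neighborSet v := M.adj_sub hp
        rwa [hu] at this
      exact hwv (matching_unique hM hMuw (hpu ▸ hp).symm)
    · push_neg at hw
      have hclosed : ∀ a ∈ ({v, u} : Set V), ∀ b, G.Adj a b → b ∈ ({v, u} : Set V) := by
        rintro a (rfl | rfl) b hab
        · right; have : b ∈ G.neighborSet a := hab; rwa [hu] at this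
        · left; exact hw b hab
      have : ∃ x : V, x ∉ ({v, u} : Set V) := by
        by_contra hx
        push_neg at hx
        have := hcard {v, u} (fun x _ => hx x)
        have h2 : ({v, u} : Set V).ncard ≤ 2 := by
          calc ({v, u} : Set V).ncard ≤ ({u} : Set V).ncard + 1 := Set.ncard_insert_le _ _
            _ = 2 := by rw [Set.ncard_singleton]
        omega
      obtain ⟨x, hx⟩ := this
      obtain ⟨p⟩ := hconn.preconnected v x
      exact hx (walk_closed hclosed p (by left; rfl))
  · -- degree 2
    obtain ⟨u, w, huw, hnbr⟩ := Set.ncard_eq_two.mp h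
    have hGvu : G.Adj v u := by rw [← G.mem_neighborSet, hnbr]; left; rfl
    have hGvw : G.Adj v w := by rw [← G.mem_neighborSet, hnbr]; right; rfl
    have htc : IsTightCut G ({v, u, w} : Set V) := by
      intro M hM
      obtain ⟨p, hp, -⟩ := hM.1 (hM.2 v)
      have hpmem : p ∈ ({u, w} : Set V) := by
        have : p ∈ G.neighborSet v := M.adj_sub hp
        rwa [hnbr] at this
      rcases hpmem with rfl | rfl
      · exact key_count G v p w hnbr huw M hM hp
      · have hX : ({v, u, p} : Set V) = ({v, p, u} : Set V) := by
          rw [Set.pair_comm u p]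
        rw [hX]
        exact key_count G v p u (by rw [hnbr, Set.pair_comm]) huw.symm M hM hp
    rcases htight _ htc with ⟨t, ht⟩ | ⟨t, ht⟩
    · have h1 : u ∈ ({t} : Set V) := ht ▸ (by right; left; rfl)
      have h2 : w ∈ ({t} : Set V) := ht ▸ (by right; right; rfl)
      exact huw (h1.trans h2.symm)
    · have huniv : Set.univ ⊆ ({t, v, u, w} : Set V) := by
        intro x _
        by_cases hx : x ∈ ({v, u, w} : Set V)
        · rcases hx with rfl | rfl | rfl
          · right; left; rfl
          · right; right; left; rfl
          · right; right; right; rfl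
        · left
          have : x ∈ ({v, u, w} : Set V)ᶜ := hx
          rw [ht] at this
          exact this
      have := hcard _ huniv
      have h4 : ({t, v, u, w} : Set V).ncard ≤ 4 := by
        calc ({t, v, u, w} : Set V).ncard
            ≤ ({v, u, w} : Set V).ncard + 1 := Set.ncard_insert_le _ _
          _ ≤ (({u, w} : Set V).ncard + 1) + 1 := by
              have := Set.ncard_insert_le v ({u, w} : Set V); omega
          _ ≤ ((({w} : Set V).ncard + 1) + 1) + 1 := by
              have := Set.ncard_insert_le u ({w} : Set V); omega
          _ = 4 := by rw [Set.ncard_singleton]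
      omega

lemma mdeg_delete {V : Type*} [Fintype V] (G : SimpleGraph V) {u v : V}
    (huv : G.Adj u v) : mdeg G u = mdeg (G.deleteEdges {s(u, v)}) u + 1 := by
  have hns : (G.deleteEdges {s(u, v)}).neighborSet u = G.neighborSet u \ {v} := by
    ext x
    simp only [mem_neighborSet, deleteEdges_adj, Set.mem_diff, Set.mem_singleton_iff]
    constructor
    · rintro ⟨hadj, hne⟩
      exact ⟨hadj, fun h => hne (by rw [h])⟩
    · rintro ⟨hadj, hne⟩
      refine ⟨hadj, fun h => ?_⟩
      rw [Sym2.eq_iff] at h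
      rcases h with ⟨-, h⟩ | ⟨h1, -⟩
      · exact hne h
      · exact huv.ne h1
  have hmem : v ∈ G.neighborSet u := huv
  unfold mdeg
  rw [hns]
  exact (Set.ncard_diff_singleton_add_one hmem (Set.toFinite _)).symm


/-- Let `G` be a brace of order six or more. If the set of all
noncubic vertices (degree four or more) is a stable set, then `G` is a minimal brace. -/
theorem statement6 {V : Type*} [Fintype V] (G : SimpleGraph V)
    (hG : IsBrace G) (horder : 6 ≤ Fintype.card V)
    (hstable : ∀ u v : V, 4 ≤ mdeg G u → 4 ≤ mdeg G v → ¬ G.Adj u v) :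
    IsMinimalBrace G := by
  refine ⟨hG, ?_⟩
  intro e he hbrace'
  induction e using Sym2.ind with
  | _ u v =>
    have hadj : G.Adj u v := he
    have hu := brace_min_degree _ hbrace' horder u
    have hv := brace_min_degree _ hbrace' horder v
    have h1 := mdeg_delete G hadj
    have h2 := mdeg_delete G hadj.symm
    rw [Sym2.eq_swap] at h2
    exact hstable u v (by omega) (by omega) hadj


end MinimalBraces
end
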